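/- The natural density of coprime pairs of positive integers equals 6/π²: as N → ∞, the number of pairs (a,b) with 1 ≤ a,b ≤ N and gcd(a,b) = 1, divided by N², converges to 1/ζ(2) = 6/π². Consequently π² = 6 · P₂^{-1}, where P₂ denotes this density. -/

import Mathlib

/-!
Möbius inversion over the divisors of `gcd a b` gives
`#{(a, b) ∈ [1, N]² | gcd a b = 1} = ∑_{d ≤ N} μ(d) ⌊N/d⌋²`.
After dividing by `N²`, the `d`-th term tends to `μ(d)/d²` and is bounded by `1/d²`,
so by dominated convergence (Tannery's theorem) the density tends to `∑ μ(d)/d² = 1/ζ(2) = 6/π²`.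
-/

open Filter Finset ArithmeticFunction Topology
open scoped ArithmeticFunction.Moebius

lemma sum_divisors_moebius (n : ℕ) : ∑ d ∈ n.divisors, μ d = if n = 1 then 1 else 0 := by
  rw [← coe_mul_zeta_apply, moebius_mul_coe_zeta, one_apply]

lemma divisors_gcd_eq_filter_Icc {N a : ℕ} (ha : a ∈ Icc 1 N) (b : ℕ) :
    (Nat.gcd a b).divisors = {d ∈ Icc 1 N | d ∣ a ∧ d ∣ b} := by
  obtain ⟨ha₀, haN⟩ := mem_Icc.1 ha
  ext d
  simp only [Nat.mem_divisors, Nat.dvd_gcd_iff, mem_filter, mem_Icc]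
  constructor
  · rintro ⟨hd, -⟩
    exact ⟨⟨Nat.pos_of_dvd_of_pos hd.1 ha₀, (Nat.le_of_dvd ha₀ hd.1).trans haN⟩, hd⟩
  · rintro ⟨-, hd⟩
    exact ⟨hd, (Nat.gcd_pos_of_pos_left b ha₀).ne'⟩

lemma card_filter_dvd_pairs_Icc (N d : ℕ) :
    #{t ∈ Icc 1 N ×ˢ Icc 1 N | d ∣ t.1 ∧ d ∣ t.2} = (N / d) ^ 2 := by
  rw [filter_product, card_product, ← Nat.Ioc_filter_dvd_card_eq_div, sq]
  rfl

theorem card_coprime_pairs_eq_sum_moebius {R : Type*} [CommRing R] (N : ℕ) :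
    (#{t ∈ Icc 1 N ×ˢ Icc 1 N | Nat.gcd t.1 t.2 = 1} : R)
      = ∑ d ∈ Icc 1 N, (μ d : R) * ((N / d : ℕ) : R) ^ 2 := by
  have indicator : ∀ t ∈ Icc 1 N ×ˢ Icc 1 N, (if Nat.gcd t.1 t.2 = 1 then 1 else 0 : R)
      = ∑ d ∈ Icc 1 N, if d ∣ t.1 ∧ d ∣ t.2 then (μ d : R) else 0 := fun t ht => by
    rw [← sum_filter, ← divisors_gcd_eq_filter_Icc (mem_product.1 ht).1, ← Int.cast_sum,
      sum_divisors_moebius]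
    split_ifs <;> simp
  rw [card_filter, Nat.cast_sum, sum_congr rfl fun t ht => by push_cast; exact indicator t ht,
    sum_comm]
  refine sum_congr rfl fun d _ => ?_
  rw [← sum_filter, sum_const, card_filter_dvd_pairs_Icc, nsmul_eq_mul, mul_comm]
  push_cast
  rfl

lemma cast_natDiv_div_le_one_div (N d : ℕ) : ((N / d : ℕ) : ℝ) / N ≤ 1 / d := by
  rcases eq_or_ne N 0 with rfl | hN
  · simp
  calc ((N / d : ℕ) : ℝ) / N ≤ (N / d) / N := by gcongr; exact Nat.cast_div_le
    _ = 1 / d := by rw [div_right_comm, div_self (by exact_mod_cast hN)]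

lemma tendsto_cast_natDiv_div_atTop (d : ℕ) :
    Tendsto (fun N : ℕ => ((N / d : ℕ) : ℝ) / N) atTop (𝓝 (1 / d)) := by
  have h := (tendsto_nat_floor_mul_div_atTop (inv_nonneg.2 (Nat.cast_nonneg' (α := ℝ) d))).comp
    tendsto_natCast_atTop_atTop
  simpa [inv_mul_eq_div, Nat.floor_div_eq_div, Function.comp_def] using h

theorem tendsto_tsum_mul_natDiv_div_pow {f : ℕ → ℝ} {C : ℝ} (hf : ∀ d, |f d| ≤ C)
    {k : ℕ} (hk : 1 < k) :
    Tendsto (fun N : ℕ => ∑' d, f d * (((N / d : ℕ) : ℝ) / N) ^ k) atTop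
      (𝓝 (∑' d, f d / d ^ k)) := by
  refine tendsto_tsum_of_dominated_convergence (bound := fun d : ℕ => C * (1 / (d : ℝ) ^ k))
    ((Real.summable_one_div_nat_pow.2 hk).mul_left C)
    (fun d => by simpa only [one_div_pow, mul_one_div] using
      ((tendsto_cast_natDiv_div_atTop d).pow k).const_mul (f d)) (.of_forall ?_)
  intro N d
  rw [norm_mul, norm_pow, Real.norm_eq_abs, Real.norm_of_nonneg (by positivity), ← one_div_pow]
  exact mul_le_mul (hf d) (pow_le_pow_left₀ (by positivity) (cast_natDiv_div_le_one_div N d) k)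
    (by positivity) ((abs_nonneg _).trans (hf d))

theorem tsum_moebius_div_pow_eq_inv_riemannZeta {k : ℕ} (hk : 1 < k) :
    ((∑' d, (μ d : ℝ) / d ^ k : ℝ) : ℂ) = (riemannZeta k)⁻¹ := by
  have hs : 1 < (k : ℂ).re := by simpa using hk
  have h := LSeries_zeta_mul_Lseries_moebius hs
  rw [LSeries_zeta_eq_riemannZeta hs] at h
  rw [← eq_inv_of_mul_eq_one_right h, Complex.ofReal_tsum, LSeries]
  refine tsum_congr fun d => ?_
  rcases eq_or_ne d 0 with rfl | hd
  · simp
  · rw [LSeries.term_of_ne_zero hd, Complex.cpow_natCast]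
    push_cast
    rfl

lemma tsum_moebius_div_sq : ∑' d, (μ d : ℝ) / d ^ 2 = 6 / Real.pi ^ 2 := by
  have h := tsum_moebius_div_pow_eq_inv_riemannZeta one_lt_two
  rw [Nat.cast_ofNat, riemannZeta_two, inv_div] at h
  exact_mod_cast h

lemma card_coprime_pairs_div_sq_eq_tsum (N : ℕ) :
    (#{t ∈ Icc 1 N ×ˢ Icc 1 N | Nat.gcd t.1 t.2 = 1} : ℝ) / N ^ 2
      = ∑' d, (μ d : ℝ) * (((N / d : ℕ) : ℝ) / N) ^ 2 := by
  rw [tsum_eq_sum (s := Icc 1 N)]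
  · rw [card_coprime_pairs_eq_sum_moebius, sum_div]
    exact sum_congr rfl fun d _ => by ring
  · intro d hd
    rcases Nat.eq_zero_or_pos d with rfl | hd₀
    · simp
    · simp only [mem_Icc, not_and, not_le] at hd
      have : N / d = 0 := Nat.div_eq_of_lt (hd hd₀)
      simp [this]

theorem tsum_one_div_nat_add_one_sq : ∑' n : ℕ, 1 / ((n : ℝ) + 1) ^ 2 = Real.pi ^ 2 / 6 := by
  rw [← hasSum_zeta_two.tsum_eq, hasSum_zeta_two.summable.tsum_eq_zero_add]
  simp

/-- The natural density of coprime pairs of positive integers equals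
`1/ζ(2) = 6/π²`: the number of pairs `(a, b)` with `1 ≤ a, b ≤ N` and `gcd(a, b) = 1`,
divided by `N²`, converges to `6/π²` as `N → ∞`; consequently `π² = 6 · P₂⁻¹` where
`P₂` is this density. -/
theorem density_coprime_pairs :
    Tendsto
        (fun N : ℕ =>
          (((Finset.Icc 1 N ×ˢ Finset.Icc 1 N).filter
              (fun t : ℕ × ℕ => Nat.gcd t.1 t.2 = 1)).card : ℝ) / (N : ℝ) ^ 2)
        atTop (nhds (6 / Real.pi ^ 2)) ∧
      ((∑' n : ℕ, 1 / ((n : ℝ) + 1) ^ 2)⁻¹ = 6 / Real.pi ^ 2) ∧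
      Real.pi ^ 2 = 6 * (6 / Real.pi ^ 2)⁻¹ := by
  refine ⟨?_, by rw [tsum_one_div_nat_add_one_sq, inv_div], by field_simp⟩
  have h := tendsto_tsum_mul_natDiv_div_pow (f := fun d => (μ d : ℝ)) (C := 1)
    (fun d => by rw [← Int.cast_abs]; exact_mod_cast abs_moebius_le_one) one_lt_two
  rw [tsum_moebius_div_sq] at h
  exact h.congr fun N => (card_coprime_pairs_div_sq_eq_tsum N).symm
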